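/- arXiv:1601.03721 — 3 statements merged into one kernel-verified Lean document; each statement's English description precedes it below -/
import Mathlib

section
/- For an integer n ≥ 2 and real m > 0, with γ = 1 - n, the identity m · Σ_{j=0}^{n-1} C(n-1, j) [ (n-1)!/j! + (n-2)!/(j-1)! ] (-1)^j (-γm)_j = (n-1) m (1 - 2m) Π_{j=1}^{n-2} (j - (n-1)m) holds, where terms with (j-1)! for j = 0 are interpreted as 0. -/
open Polynomial Finset

private lemma desc_succ_left_eval (N : ℕ) (z : ℝ) :
    (descPochhammer ℝ (N + 1)).eval z = z * (descPochhammer ℝ N).eval (z - 1) := by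
  rw [descPochhammer_succ_left, eval_mul, eval_X, eval_comp, eval_sub, eval_X, eval_one]

private lemma desc_vdm (x y : ℝ) : ∀ N : ℕ, (descPochhammer ℝ N).eval (x + y)
    = ∑ j ∈ range (N + 1), (N.choose j : ℝ) *
        ((descPochhammer ℝ j).eval x * (descPochhammer ℝ (N - j)).eval y) := by
  intro N
  induction N with
  | zero => simp
  | succ N ih =>
    have step : ∀ j ∈ range (N + 1),
        (N.choose j : ℝ) * ((descPochhammer ℝ j).eval x * (descPochhammer ℝ (N - j)).eval y)
          * (x + y - N)
        = (N.choose j : ℝ) *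
            ((descPochhammer ℝ (j + 1)).eval x * (descPochhammer ℝ (N - j)).eval y)
          + (N.choose j : ℝ) *
            ((descPochhammer ℝ j).eval x * (descPochhammer ℝ (N + 1 - j)).eval y) := by
      intro j hj
      have hj' : j ≤ N := Nat.lt_succ_iff.mp (mem_range.mp hj)
      rw [show N + 1 - j = (N - j) + 1 by omega, descPochhammer_succ_eval,
        descPochhammer_succ_eval]
      have hc : ((N - j : ℕ) : ℝ) = (N : ℝ) - j := by
        push_cast [hj']; ring
      rw [hc]; ring
    rw [descPochhammer_succ_eval, ih, Finset.sum_mul, Finset.sum_congr rfl step,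
      Finset.sum_add_distrib]
    have hg0 : ∑ j ∈ range (N + 1 + 1), (N.choose j : ℝ) *
          ((descPochhammer ℝ j).eval x * (descPochhammer ℝ (N + 1 - j)).eval y)
        = ∑ j ∈ range (N + 1), (N.choose j : ℝ) *
          ((descPochhammer ℝ j).eval x * (descPochhammer ℝ (N + 1 - j)).eval y) := by
      rw [Finset.sum_range_succ]
      simp [Nat.choose_succ_self]
    rw [← hg0, Finset.sum_range_succ'
      (fun j => (N.choose j : ℝ) *
        ((descPochhammer ℝ j).eval x * (descPochhammer ℝ (N + 1 - j)).eval y)) (N + 1),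
      Finset.sum_range_succ'
      (fun j => ((N + 1).choose j : ℝ) *
        ((descPochhammer ℝ j).eval x * (descPochhammer ℝ (N + 1 - j)).eval y)) (N + 1)]
    simp only [Nat.succ_sub_succ, Nat.choose_succ_succ, Nat.cast_add, Nat.choose_zero_right,
      Nat.cast_one, Nat.sub_zero, descPochhammer_zero, eval_one, one_mul, add_mul]
    rw [Finset.sum_add_distrib]
    ring

private lemma desc_prod (c : ℝ) : ∀ M : ℕ,
    (descPochhammer ℝ M).eval ((M : ℝ) + c) = ∏ j ∈ Finset.Icc 1 M, ((j : ℝ) + c) := by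
  intro M
  induction M with
  | zero => simp
  | succ M ih =>
    rw [desc_succ_left_eval, show ((M + 1 : ℕ) : ℝ) + c - 1 = (M : ℝ) + c by push_cast; ring,
      ih, Finset.prod_Icc_succ_top (Nat.succ_le_succ (Nat.zero_le M))]
    push_cast
    ring

theorem stmt_7 (n : ℕ) (hn : 2 ≤ n) (m : ℝ) (hm : 0 < m) (γ : ℝ) (hγ : γ = 1 - n) :
    m * ∑ j ∈ range n, ((n - 1).choose j : ℝ) *
        (((n - 1).factorial : ℝ) / (j.factorial : ℝ) +
          (if j = 0 then 0 else ((n - 2).factorial : ℝ) / ((j - 1).factorial : ℝ))) *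
        (-1) ^ j * (ascPochhammer ℝ j).eval (-(γ * m))
      = ((n : ℝ) - 1) * m * (1 - 2 * m) *
        ∏ j ∈ Finset.Icc 1 (n - 2), ((j : ℝ) - ((n : ℝ) - 1) * m) := by
  obtain ⟨M, rfl⟩ : ∃ M, n = M + 2 := ⟨n - 2, by omega⟩
  set x : ℝ := -(((M : ℝ) + 1) * m) with hx
  have hγm : -(γ * m) = -x := by
    rw [hγ, hx]; push_cast; ring
  -- rewrite each summand
  have hterm : ∀ j ∈ range (M + 2),
      ((M + 2 - 1).choose j : ℝ) *
        (((M + 2 - 1).factorial : ℝ) / (j.factorial : ℝ) +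
          (if j = 0 then 0 else ((M + 2 - 2).factorial : ℝ) / ((j - 1).factorial : ℝ))) *
        (-1) ^ j * (ascPochhammer ℝ j).eval (-(γ * m))
      = ((M + 1).choose j : ℝ) *
          ((descPochhammer ℝ j).eval x * (descPochhammer ℝ (M + 1 - j)).eval ((M + 1 : ℕ) : ℝ))
        + ((M + 1).choose j : ℝ) *
          ((descPochhammer ℝ j).eval x * (descPochhammer ℝ (M + 1 - j)).eval ((M : ℕ) : ℝ)) := by
    intro j hj
    have hj' : j ≤ M + 1 := Nat.lt_succ_iff.mp (mem_range.mp hj)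
    have hasc : (ascPochhammer ℝ j).eval (-(γ * m))
        = (-1 : ℝ) ^ j * (descPochhammer ℝ j).eval x := by
      rw [hγm, ascPochhammer_eval_neg_eq_descPochhammer]
    have hd1 : (descPochhammer ℝ (M + 1 - j)).eval ((M + 1 : ℕ) : ℝ)
        = ((M + 1).factorial : ℝ) / (j.factorial : ℝ) := by
      rw [descPochhammer_eval_eq_descFactorial]
      have h := Nat.factorial_mul_descFactorial (n := M + 1) (k := M + 1 - j) (by omega)
      rw [show M + 1 - (M + 1 - j) = j by omega] at h
      have hj0 : (j.factorial : ℝ) ≠ 0 := by positivity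
      field_simp
      exact_mod_cast (by rw [mul_comm] at h; exact h)
    have hd2 : (descPochhammer ℝ (M + 1 - j)).eval ((M : ℕ) : ℝ)
        = if j = 0 then 0 else ((M).factorial : ℝ) / ((j - 1).factorial : ℝ) := by
      rw [descPochhammer_eval_eq_descFactorial]
      by_cases h0 : j = 0
      · subst h0
        simp [Nat.descFactorial_eq_zero_iff_lt.mpr (Nat.lt_succ_self M)]
      · rw [if_neg h0]
        have h := Nat.factorial_mul_descFactorial (n := M) (k := M + 1 - j) (by omega)
        rw [show M - (M + 1 - j) = j - 1 by omega] at h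
        have hj0 : ((j - 1).factorial : ℝ) ≠ 0 := by positivity
        field_simp
        exact_mod_cast (by rw [mul_comm] at h; exact h)
    rw [show M + 2 - 1 = M + 1 by omega, show M + 2 - 2 = M by omega, hd1.symm, hd2.symm, hasc]
    have hsq : ((-1 : ℝ)) ^ j * (-1) ^ j = 1 := by
      rw [← mul_pow]; norm_num
    linear_combination (((M + 1).choose j : ℝ) *
      ((descPochhammer ℝ (M + 1 - j)).eval ((M + 1 : ℕ) : ℝ) +
        (descPochhammer ℝ (M + 1 - j)).eval ((M : ℕ) : ℝ)) *
      (descPochhammer ℝ j).eval x) * hsq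
  rw [Finset.sum_congr rfl hterm, Finset.sum_add_distrib,
    show M + 2 = (M + 1) + 1 from rfl,
    ← desc_vdm x ((M + 1 : ℕ) : ℝ) (M + 1), ← desc_vdm x ((M : ℕ) : ℝ) (M + 1)]
  have e1 : (descPochhammer ℝ (M + 1)).eval (x + ((M + 1 : ℕ) : ℝ))
      = (x + ((M + 1 : ℕ) : ℝ)) * (descPochhammer ℝ M).eval ((M : ℝ) + x) := by
    rw [desc_succ_left_eval]
    congr 1
    push_cast
    ring
  have e2 : (descPochhammer ℝ (M + 1)).eval (x + ((M : ℕ) : ℝ))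
      = (descPochhammer ℝ M).eval ((M : ℝ) + x) * x := by
    rw [descPochhammer_succ_eval]
    congr 1
    · congr 1; push_cast; ring
    · push_cast; ring
  rw [e1, e2, desc_prod x M]
  have hp : ∏ j ∈ Finset.Icc 1 M, ((j : ℝ) + x)
      = ∏ j ∈ Finset.Icc 1 (M + 2 - 2), ((j : ℝ) - (((M + 2 : ℕ) : ℝ) - 1) * m) := by
    rw [show M + 2 - 2 = M by omega]
    refine Finset.prod_congr rfl fun j _ => ?_
    rw [hx]; push_cast; ring
  rw [hp]
  set P : ℝ := ∏ j ∈ Finset.Icc 1 (M + 2 - 2), ((j : ℝ) - (((M + 2 : ℕ) : ℝ) - 1) * m) with hP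
  rw [hx]
  push_cast
  ring
end

section
/- For integers n ≥ 1 and real s > -1, and for |t| < 1, the power series identity Σ_{k≥0} (n+s+2)_k t^k / (k! (n+k)) = t^{-n} Σ_{j=0}^{n-1} C(n-1, j) (-1)^j [ (1-t)^{j-n-s-1} - 1 ] / (s+n+1-j) holds (for t ≠ 0). -/
/-!
Multiplied by `tⁿ`, both sides are antiderivatives of `x ↦ x ^ (n - 1) * (1 - x) ^ (-(n + s + 2))`
on `(-1, 1)` vanishing at `0`. On the left this is term-by-term differentiation of the binomial
series `(1 - x) ^ (-ν) = ∑ (ν)ₖ xᵏ / k!`; on the right each summand differentiates to a power of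
`1 - x`, and the sum recombines by `x ^ (n - 1) = ∑ C(n - 1, j) (x - 1) ^ j`.
-/

open Polynomial Finset
open scoped Nat ENNReal NNReal

theorem ascPochhammer_eval_div_factorial {K : Type*} [Field K] [CharZero K] (ν : K) (k : ℕ) :
    (ascPochhammer K k).eval ν / k ! = Ring.choose (ν + k - 1) k := by
  rw [← Ring.multichoose_eq, ← ascPochhammer_smeval_eq_eval,
    ← Ring.factorial_nsmul_multichoose_eq_ascPochhammer, nsmul_eq_mul]
  exact mul_div_cancel_left₀ _ (Nat.cast_ne_zero.2 k.factorial_ne_zero)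

theorem hasFPowerSeriesOnBall_one_sub_rpow_neg (ν : ℝ) :
    HasFPowerSeriesOnBall (fun x => (1 - x) ^ (-ν))
      (.ofScalars ℝ fun k => (ascPochhammer ℝ k).eval ν / k !) 0 1 := by
  simp_rw [ascPochhammer_eval_div_factorial]
  refine (Real.one_div_one_sub_rpow_hasFPowerSeriesOnBall_zero ν).congr fun x hx => ?_
  have hx : |x| < 1 := by simpa [edist_dist] using hx
  simp only [Real.rpow_neg (sub_nonneg.2 (abs_lt.1 hx).2.le), one_div]

theorem hasDerivAt_tsum_mul_pow_add_div {f : ℝ → ℝ} {c : ℕ → ℝ} {R : ℝ≥0∞}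
    (hf : HasFPowerSeriesOnBall f (.ofScalars ℝ c) 0 R) {n : ℕ} (hn : n ≠ 0) {x : ℝ}
    (hx : x ∈ Metric.eball 0 R) :
    HasDerivAt (fun z => ∑' k, c k * z ^ (n + k) / ((n : ℝ) + k)) (x ^ (n - 1) * f x) x := by
  obtain ⟨r, hxr, hrR⟩ := ENNReal.lt_iff_exists_nnreal_btwn.1 (Metric.mem_eball.1 hx)
  rw [edist_lt_coe, ← NNReal.coe_lt_coe, coe_nndist, dist_zero_right, Real.norm_eq_abs] at hxr
  have hsum : Summable fun k => ‖c k‖ * (r : ℝ) ^ k := by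
    simpa using (FormalMultilinearSeries.ofScalars ℝ c).summable_norm_mul_pow (hrR.trans_le hf.r_le)
  have hfx : HasSum (fun k => c k * x ^ k) (f x) := by
    simpa [FormalMultilinearSeries.ofScalars_apply_eq, mul_comm] using hf.hasSum hx
  have hterm : ∀ k y, HasDerivAt (fun z => c k * z ^ (n + k) / ((n : ℝ) + k))
      (y ^ (n - 1) * (c k * y ^ k)) y := by
    intro k y
    have hnk : (n : ℝ) + k ≠ 0 := by positivity
    refine (((hasDerivAt_pow (n + k) y).const_mul (c k)).div_const ((n : ℝ) + k)).congr_deriv ?_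
    rw [show n + k - 1 = n - 1 + k by omega, pow_add]
    push_cast
    field_simp
  have hbound : ∀ k, ∀ y ∈ Set.Ioo (-(r : ℝ)) r,
      ‖y ^ (n - 1) * (c k * y ^ k)‖ ≤ (r : ℝ) ^ (n - 1) * (‖c k‖ * (r : ℝ) ^ k) := by
    intro k y hy
    have hy : ‖y‖ ≤ r := (abs_lt.2 hy).le
    rw [norm_mul, norm_mul, norm_pow, norm_pow]
    gcongr
  have hzero : Summable fun k => c k * (0 : ℝ) ^ (n + k) / ((n : ℝ) + k) :=
    summable_zero.congr fun k => by simp [zero_pow (show n + k ≠ 0 by omega)]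
  have h0 : (0 : ℝ) ∈ Set.Ioo (-(r : ℝ)) r := by
    have := (abs_nonneg x).trans_lt hxr
    exact ⟨neg_neg_of_pos this, this⟩
  have := hasDerivAt_tsum_of_isPreconnected (hsum.mul_left _) isOpen_Ioo isPreconnected_Ioo
    (fun k y _ => hterm k y) hbound h0 hzero (abs_lt.1 hxr)
  rwa [tsum_mul_left, hfx.tsum_eq] at this

theorem sum_range_choose_mul_sub_one_pow {R : Type*} [CommRing R] {n : ℕ} (hn : n ≠ 0) (y : R) :
    ∑ j ∈ range n, ((n - 1).choose j : R) * (y - 1) ^ j = y ^ (n - 1) := by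
  have := add_pow (y - 1) 1 (n - 1)
  rw [Nat.sub_add_cancel (Nat.one_le_iff_ne_zero.2 hn), sub_add_cancel] at this
  simp [this, mul_comm]

theorem hasDerivAt_sum_choose_mul_one_sub_rpow {n : ℕ} (hn : n ≠ 0) {a : ℝ}
    (ha : ∀ j < n, (j : ℝ) ≠ a) {y : ℝ} (hy : y < 1) :
    HasDerivAt (fun z => ∑ j ∈ range n, ((n - 1).choose j : ℝ) * (-1) ^ j *
        (((1 - z) ^ ((j : ℝ) - a) - 1) / (a - j)))
      (y ^ (n - 1) * (1 - y) ^ (-(a + 1))) y := by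
  have hy : 0 < 1 - y := sub_pos.2 hy
  have hterm : ∀ j ∈ range n, HasDerivAt
      (fun z => ((n - 1).choose j : ℝ) * (-1) ^ j * (((1 - z) ^ ((j : ℝ) - a) - 1) / (a - j)))
      (((n - 1).choose j : ℝ) * (y - 1) ^ j * (1 - y) ^ (-(a + 1))) y := by
    intro j hj
    have hja : a - j ≠ 0 := sub_ne_zero.2 (ha j (mem_range.1 hj)).symm
    refine (((((hasDerivAt_id y).const_sub 1).rpow_const (p := (j : ℝ) - a) (Or.inl hy.ne')
      ).sub_const 1).div_const (a - j)).const_mul _ |>.congr_deriv ?_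
    rw [id_eq, show (j : ℝ) - a - 1 = j + -(a + 1) by ring, Real.rpow_add hy, Real.rpow_natCast,
      show y - 1 = -1 * (1 - y) by ring, mul_pow]
    field_simp
    ring
  refine (HasDerivAt.fun_sum hterm).congr_deriv ?_
  rw [← sum_mul, sum_range_choose_mul_sub_one_pow hn]

theorem stmt_11 (n : ℕ) (hn : 1 ≤ n) (s : ℝ) (hs : -1 < s) (t : ℝ)
    (ht : |t| < 1) (ht0 : t ≠ 0) :
    ∑' k : ℕ, (ascPochhammer ℝ k).eval ((n : ℝ) + s + 2) * t ^ k /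
        (k.factorial * ((n : ℝ) + k))
      = t ^ (-(n : ℤ)) * ∑ j ∈ range n, ((n - 1).choose j : ℝ) * (-1) ^ j *
          (((1 - t) ^ ((j : ℝ) - n - s - 1) - 1) / (s + n + 1 - j)) := by
  have hn : n ≠ 0 := by omega
  set ν : ℝ := n + s + 2
  set c : ℕ → ℝ := fun k => (ascPochhammer ℝ k).eval ν / (k ! : ℝ)
  set a : ℝ := s + n + 1
  set G := fun z : ℝ => ∑' k, c k * z ^ (n + k) / ((n : ℝ) + k)
  set H := fun z : ℝ => ∑ j ∈ range n, ((n - 1).choose j : ℝ) * (-1) ^ j *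
    (((1 - z) ^ ((j : ℝ) - a) - 1) / (a - j))
  have hG : ∀ y ∈ Set.Ioo (-1 : ℝ) 1, HasDerivAt G (y ^ (n - 1) * (1 - y) ^ (-ν)) y :=
    fun y hy => hasDerivAt_tsum_mul_pow_add_div (hasFPowerSeriesOnBall_one_sub_rpow_neg ν) hn
      (by simpa [edist_dist, abs_lt] using hy)
  have hH : ∀ y ∈ Set.Ioo (-1 : ℝ) 1, HasDerivAt H (y ^ (n - 1) * (1 - y) ^ (-ν)) y := by
    intro y hy
    have ha : ∀ j < n, (j : ℝ) ≠ a := fun j hj => by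
      have : (j : ℝ) < n := by exact_mod_cast hj
      exact (by linarith : (j : ℝ) < a).ne
    convert hasDerivAt_sum_choose_mul_one_sub_rpow hn ha hy.2 using 3
    ring
  have hGH : Set.EqOn G H (Set.Ioo (-1) 1) :=
    isOpen_Ioo.eqOn_of_deriv_eq isPreconnected_Ioo
      (fun y hy => (hG y hy).differentiableAt.differentiableWithinAt)
      (fun y hy => (hH y hy).differentiableAt.differentiableWithinAt)
      (fun y hy => (hG y hy).deriv.trans (hH y hy).deriv.symm)
      (x := 0) (by norm_num) (by simp [G, H, hn])
  have hGHt : G t = H t := hGH (abs_lt.1 ht)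
  rw [zpow_neg, zpow_natCast, eq_inv_mul_iff_mul_eq₀ (pow_ne_zero n ht0), ← tsum_mul_left]
  convert hGHt using 1
  · refine tsum_congr fun k => ?_
    simp only [c, pow_add]
    field_simp
  · refine sum_congr rfl fun j _ => ?_
    congr 4
    ring
end

section
/- For integers n ≥ 2, m ≥ 1, and q_{2k} = 1/(2k+2n), setting d_k = q_{2k}/N(k) where N(k) = (2k+n-1)(k+n-2)!/(k!(n-1)!), one has the asymptotic q_{2k+2m}/q_{2k} - d_k/d_{k-m} = (n-1)m/k + O(1/k²) as k → ∞. -/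
/-!
Both ratios have expansions `1 - a/k + O(1/k²)`, and such expansions multiply by adding the
`a`'s. First, `q_{2k+2m}/q_{2k} = (k+n)/(k+n+m)` has `a = m`. Second, `d_k/d_{k-m}` telescopes
into `m` one-step ratios `d_{j+1}/d_j`, each a product of three factors `(x+c)/(x+c+e)` whose
`e`'s add up to `n`; so it has `a = nm`, and the difference is `(n-1)m/k + O(1/k²)`.
-/

open Filter Asymptotics Topology

def HasAsympOneSub (f : ℕ → ℝ) (a : ℝ) : Prop :=
  (fun k : ℕ => f k - (1 - a / k)) =O[atTop] fun k : ℕ => 1 / (k : ℝ) ^ 2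

lemma isEquivalent_natCast_add (b : ℝ) :
    (fun k : ℕ => (k : ℝ) + b) ~[atTop] fun k : ℕ => (k : ℝ) :=
  IsEquivalent.refl.add_isLittleO <|
    (isLittleO_const_id_atTop b).comp_tendsto tendsto_natCast_atTop_atTop

lemma hasAsympOneSub_div_add_add (c e : ℝ) :
    HasAsympOneSub (fun k : ℕ => ((k : ℝ) + c) / ((k : ℝ) + c + e)) e := by
  have hden : (fun k : ℕ => (k : ℝ) * ((k : ℝ) + (c + e))) ~[atTop] fun k : ℕ => (k : ℝ) ^ 2 := by
    simpa only [Pi.mul_def, sq] using IsEquivalent.refl.mul (isEquivalent_natCast_add (c + e))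
  -- the remainder is exactly `e (c + e) / (k (k + c + e))`
  have hrem := hden.inv.isBigO.const_mul_left (e * (c + e))
  simp only [Pi.inv_def] at hrem
  refine hrem.congr' ?_ (.of_eq (by simp))
  filter_upwards [eventually_gt_atTop 0,
    tendsto_natCast_atTop_atTop.eventually_gt_atTop (-(c + e))] with k hk hkce
  have hk' : (k : ℝ) ≠ 0 := by positivity
  have : (k : ℝ) + (c + e) ≠ 0 := by linarith
  have : (k : ℝ) + c + e ≠ 0 := by linarith
  field_simp
  ring

lemma tendsto_one_sub_div_natCast (a : ℝ) :
    Tendsto (fun k : ℕ => 1 - a / k) atTop (𝓝 1) := by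
  simpa using tendsto_const_nhds.sub (tendsto_const_div_atTop_nhds_zero_nat a)

lemma HasAsympOneSub.tendsto {f : ℕ → ℝ} {a : ℝ} (h : HasAsympOneSub f a) :
    Tendsto f atTop (𝓝 1) := by
  have hsq : Tendsto (fun k : ℕ => 1 / (k : ℝ) ^ 2) atTop (𝓝 0) := by
    have := ((tendsto_pow_atTop (n := 2) two_ne_zero).comp
      (tendsto_natCast_atTop_atTop (R := ℝ))).inv_tendsto_atTop
    simpa only [one_div, Pi.inv_def, Function.comp_def] using this
  simpa using (h.trans_tendsto hsq).add (tendsto_one_sub_div_natCast a)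

lemma HasAsympOneSub.mul {f g : ℕ → ℝ} {a b : ℝ} (hf : HasAsympOneSub f a)
    (hg : HasAsympOneSub g b) : HasAsympOneSub (fun k => f k * g k) (a + b) := by
  have hfg : (fun k : ℕ => f k * (g k - (1 - b / k))) =O[atTop] fun k : ℕ => 1 / (k : ℝ) ^ 2 := by
    simpa using hf.tendsto.isBigO_one ℝ |>.mul hg
  have hgf : (fun k : ℕ => (1 - b / k) * (f k - (1 - a / k))) =O[atTop]
      fun k : ℕ => 1 / (k : ℝ) ^ 2 := by
    simpa using (tendsto_one_sub_div_natCast b).isBigO_one ℝ |>.mul hf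
  have hab : (fun k : ℕ => a * b / (k : ℝ) ^ 2) =O[atTop] fun k : ℕ => 1 / (k : ℝ) ^ 2 :=
    (isBigO_refl _ _).const_mul_left (a * b) |>.congr_left fun k => by ring
  refine ((hfg.add hgf).add hab).congr_left fun k => ?_
  ring

lemma HasAsympOneSub.congr {f g : ℕ → ℝ} {a : ℝ} (h : HasAsympOneSub f a)
    (hfg : f =ᶠ[atTop] g) : HasAsympOneSub g a :=
  h.congr' (hfg.sub .rfl) .rfl

lemma HasAsympOneSub.sub {f g : ℕ → ℝ} {a b : ℝ} (hf : HasAsympOneSub f a)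
    (hg : HasAsympOneSub g b) :
    (fun k : ℕ => f k - g k - (b - a) / k) =O[atTop] fun k : ℕ => 1 / (k : ℝ) ^ 2 :=
  (IsBigO.sub hf hg).congr_left fun k => by ring

lemma hasAsympOneSub_div_sub_of_step {d : ℕ → ℝ} {R : ℝ → ℝ} {a : ℝ} (hd : ∀ j, d j ≠ 0)
    (hstep : ∀ j : ℕ, d (j + 1) / d j = R j)
    (hR : ∀ t : ℝ, HasAsympOneSub (fun k : ℕ => R (k - t)) a) (m : ℕ) :
    HasAsympOneSub (fun k => d k / d (k - m)) (m * a) := by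
  induction m with
  | zero => simpa [HasAsympOneSub, hd] using isBigO_zero _ _
  | succ m ih =>
    have hlast : (fun k : ℕ => R (k - (m + 1 : ℕ))) =ᶠ[atTop]
        fun k => d (k - m) / d (k - (m + 1)) := by
      filter_upwards [eventually_ge_atTop (m + 1)] with k hk
      rw [← Nat.cast_sub hk, ← hstep, Nat.sub_add_eq, Nat.sub_add_cancel (by omega)]
    have hprod := ih.mul ((hR _).congr hlast)
    rw [Nat.cast_succ, add_one_mul]
    simpa only [div_mul_div_cancel₀ (hd _)] using hprod

/-- The dimension of the space of spherical harmonics of degree `k` on `ℝ^(n+1)`. -/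
noncomputable def harmonicDim (n k : ℕ) : ℝ :=
  (2 * k + n - 1 : ℝ) * (k + n - 2).factorial / (k.factorial * (n - 1).factorial)

lemma harmonicDim_pos {n : ℕ} (hn : 2 ≤ n) (k : ℕ) : 0 < harmonicDim n k := by
  have : (2 : ℝ) ≤ n := by exact_mod_cast hn
  unfold harmonicDim
  have : (0 : ℝ) < 2 * k + n - 1 := by linarith [(k.cast_nonneg : (0 : ℝ) ≤ k)]
  positivity

lemma harmonicDim_div_harmonicDim_succ {n : ℕ} (hn : 2 ≤ n) (j : ℕ) :
    harmonicDim n j / harmonicDim n (j + 1) =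
      (j + (n - 1) / 2) / (j + (n - 1) / 2 + 1) * ((j + 1) / (j + 1 + (n - 2))) := by
  have hfac : (j + 1 + n - 2).factorial = (j + n - 1) * (j + n - 2).factorial := by
    rw [show j + 1 + n - 2 = (j + n - 2) + 1 by omega, Nat.factorial_succ]
    congr 1
    omega
  have hn' : (2 : ℝ) ≤ n := by exact_mod_cast hn
  have hj : (0 : ℝ) ≤ j := j.cast_nonneg
  simp only [harmonicDim, hfac, Nat.factorial_succ]
  push_cast [Nat.cast_sub (show 1 ≤ j + n by omega)]
  have : (2 * (j + 1) + n - 1 : ℝ) ≠ 0 := by linarith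
  have : (j + n - 1 : ℝ) ≠ 0 := by linarith
  have : (j + 1 + (n - 2) : ℝ) ≠ 0 := by linarith
  have : (2 * j + (n - 1) + 2 : ℝ) ≠ 0 := by linarith
  field_simp
  ring

theorem stmt_13_general (n m : ℕ) (hn : 2 ≤ n)
    (q N d : ℕ → ℝ)
    (hq : ∀ k, q k = 1 / (2 * k + 2 * n))
    (hN : ∀ k, N k = (2 * k + n - 1 : ℝ) * (k + n - 2).factorial /
      (k.factorial * (n - 1).factorial))
    (hd : ∀ k, d k = q k / N k) :
    (fun k : ℕ => q (k + m) / q k - d k / d (k - m) - ((n : ℝ) - 1) * m / k)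
      =O[atTop] fun k : ℕ => 1 / (k : ℝ) ^ 2 := by
  obtain rfl : N = harmonicDim n := funext hN
  have hq_ratio (k j : ℕ) : q (k + j) / q k = (k + n) / (k + n + j) := by
    rw [hq, hq]
    field_simp
    push_cast
    ring
  have hd_ne (j : ℕ) : d j ≠ 0 := by
    rw [hd, hq]
    exact div_ne_zero (by positivity) (harmonicDim_pos hn j).ne'
  set R : ℝ → ℝ := fun x => (x + n) / (x + n + 1) *
    ((x + (n - 1) / 2) / (x + (n - 1) / 2 + 1) * ((x + 1) / (x + 1 + (n - 2))))
  have hd_step (j : ℕ) : d (j + 1) / d j = R j := by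
    rw [hd, hd, div_div_div_comm, ← inv_div (harmonicDim n j), div_inv_eq_mul, hq_ratio,
      harmonicDim_div_harmonicDim_succ hn, Nat.cast_one]
  have hR (t : ℝ) : HasAsympOneSub (fun k : ℕ => R (k - t)) n := by
    convert (hasAsympOneSub_div_add_add (n - t) 1).mul
      ((hasAsympOneSub_div_add_add ((n - 1) / 2 - t) 1).mul
        (hasAsympOneSub_div_add_add (1 - t) (n - 2))) using 1
    · ext k
      simp only [R]
      ring
    · ring
  have hQ := (hasAsympOneSub_div_add_add n m).congr (.of_eq (funext fun k => (hq_ratio k m).symm))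
  refine (hQ.sub (hasAsympOneSub_div_sub_of_step hd_ne hd_step hR m)).congr_left fun k => ?_
  ring

/-- `q k` stands for the moment `q_{2k} = 1/(2k+2n)`. -/
theorem stmt_13 (n m : ℕ) (hn : 2 ≤ n) (hm : 1 ≤ m)
    (q N d : ℕ → ℝ)
    (hq : ∀ k, q k = 1 / (2 * k + 2 * n))
    (hN : ∀ k, N k = (2 * k + n - 1 : ℝ) * (k + n - 2).factorial /
      (k.factorial * (n - 1).factorial))
    (hd : ∀ k, d k = q k / N k) :
    (fun k : ℕ => q (k + m) / q k - d k / d (k - m) - ((n : ℝ) - 1) * m / k)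
      =O[atTop] fun k : ℕ => 1 / (k : ℝ) ^ 2 :=
  stmt_13_general n m hn q N d hq hN hd
end
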